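/- arXiv:0808.3799 — 3 statements merged into one kernel-verified Lean document; each statement's English description precedes it below -/
import Mathlib

section
/- An arbitrary fiber product of shrinkable maps is shrinkable: if (f_i : X_i → Y)_{i ∈ I} is a family of shrinkable maps over a common base Y, then the fibered product map ∏_Y X_i → Y is shrinkable. -/
open unitInterval

/-- A continuous map `f : X → Y` is *shrinkable* if it admits a continuous section
`s : Y → X` together with a fiberwise strong deformation retraction of `X` onto `s(Y)`. -/
def Shrinkable {X Y : Type*} [TopologicalSpace X] [TopologicalSpace Y]
    (f : C(X, Y)) : Prop :=
  ∃ (s : C(Y, X)) (H : C(X × I, X)),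
    (∀ y, f (s y) = y) ∧
    (∀ x, H (x, 0) = x) ∧
    (∀ x, H (x, 1) = s (f x)) ∧
    (∀ x t, f (H (x, t)) = f x) ∧
    (∀ y t, H (s y, t) = s y)

section FiberProduct

variable {ι Y Z : Type*} [TopologicalSpace Y] [TopologicalSpace Z]
  {X : ι → Type*} [∀ i, TopologicalSpace (X i)]

/-- The base point is kept as a coordinate so that the fibered product over an empty family is
still `Y`. -/
abbrev FiberProduct (f : ∀ i, C(X i, Y)) : Type _ :=
  {p : Y × (∀ i, X i) // ∀ i, f i (p.2 i) = p.1}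

namespace FiberProduct

variable (f : ∀ i, C(X i, Y))

def proj : C(FiberProduct f, Y) :=
  ⟨fun p => p.1.1, continuous_fst.comp continuous_subtype_val⟩

def eval (i : ι) : C(FiberProduct f, X i) :=
  ⟨fun p => p.1.2 i, ((continuous_apply i).comp continuous_snd).comp continuous_subtype_val⟩

theorem map_eval (i : ι) (p : FiberProduct f) : f i (eval f i p) = proj f p :=
  p.2 i

def lift (g : C(Z, Y)) (h : ∀ i, C(Z, X i)) (hgh : ∀ i z, f i (h i z) = g z) :
    C(Z, FiberProduct f) :=
  ⟨fun z => ⟨(g z, fun i => h i z), fun i => hgh i z⟩,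
    (g.continuous.prodMk (continuous_pi fun i => (h i).continuous)).subtype_mk _⟩

variable {f}

theorem ext {p q : FiberProduct f} (hproj : proj f p = proj f q)
    (heval : ∀ i, eval f i p = eval f i q) : p = q :=
  Subtype.ext (Prod.ext hproj (funext heval))

end FiberProduct

open FiberProduct

theorem Shrinkable.fiberProduct {f : ∀ i, C(X i, Y)} (hf : ∀ i, Shrinkable (f i)) :
    Shrinkable (proj f) := by
  choose s H hs h0 h1 hfib hstat using hf
  let S : C(Y, FiberProduct f) := lift f (.id Y) s hs
  let K : C(FiberProduct f × I, FiberProduct f) :=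
    lift f ((proj f).comp .fst) (fun i => (H i).comp ((eval f i).prodMap (.id I)))
      (fun i q => (hfib i _ _).trans (map_eval f i q.1))
  refine ⟨S, K, fun y => rfl, fun p => ?_, fun p => ?_, fun p t => rfl, fun y t => ?_⟩
  · exact ext rfl fun i => h0 i _
  · exact ext rfl fun i => (h1 i _).trans (congrArg (s i) (map_eval f i p))
  · exact ext rfl fun i => hstat i y t

end FiberProduct

/-- An arbitrary fiber product of shrinkable maps over a common base `Y` is shrinkable.
The fibered product `∏_Y X_i` is realized as the subspace of `Y × ∏ X_i` of tuples `(y, (x_i))`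
with `f_i (x_i) = y` for all `i`, mapping to `Y` by the first projection (the common value). -/
theorem shrinkable_fiberProduct {ι : Type*} {Y : Type*} [TopologicalSpace Y]
    {X : ι → Type*} [∀ i, TopologicalSpace (X i)]
    (f : ∀ i, C(X i, Y)) (hf : ∀ i, Shrinkable (f i)) :
    Shrinkable (⟨fun p : {p : Y × (∀ i, X i) // ∀ i, f i (p.2 i) = p.1} => p.1.1,
      continuous_fst.comp continuous_subtype_val⟩ :
        C({p : Y × (∀ i, X i) // ∀ i, f i (p.2 i) = p.1}, Y)) :=
  Shrinkable.fiberProduct hf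
end

section
/- Section extension along a shrinkable map: let p : X → B be a shrinkable map of topological spaces, let A ⊆ B be a closed subspace such that the inclusion A ↪ B is a Hurewicz cofibration, and let s : A → X be a partial section of p over A. Then there exists a continuous map σ : B → X extending s such that p ∘ σ is homotopic to the identity of B via a homotopy fixing A pointwise. -/
open unitInterval

/-!
The shrinking homotopy `H` of `p`, run backwards along `s`, is a homotopy `(a, t) ↦ H (s a, 1 - t)`
over `A` from `S ∘ p ∘ s = S|_A` to `s`, where `S` is the global section. Together with `S` on
`B × {0}` it defines a map on the mapping cylinder `(A × I) ∪ (B × {0})`; composing it with the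
retraction `r` gives a map `Ψ : B × I → X` with `p ∘ Ψ = fst ∘ r`. Then `σ = Ψ(·, 1)` extends `s`,
and `(b, t) ↦ fst (r (b, 1 - t))` is a homotopy rel `A` from `p ∘ σ` to the identity.
-/

section MappingCylinder

variable {B X : Type*} {A : Set B}

open scoped Classical in
-- Only the values on the mapping cylinder `(A × I) ∪ (B × {0})` matter.
noncomputable def cylinderGlue (f : A × I → X) (g : B → X) (z : B × I) : X :=
  if h : z.1 ∈ A then f (⟨z.1, h⟩, z.2) else g z.1

theorem cylinderGlue_of_mem (f : A × I → X) (g : B → X) (a : A) (t : I) :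
    cylinderGlue f g ((a : B), t) = f (a, t) :=
  dif_pos a.2

theorem cylinderGlue_zero {f : A × I → X} {g : B → X} (hfg : ∀ a, f (a, 0) = g a) (b : B) :
    cylinderGlue f g (b, 0) = g b := by
  unfold cylinderGlue
  split_ifs with h
  exacts [hfg ⟨b, h⟩, rfl]

theorem cylinderGlue_mem_fiber {Y : Type*} (p : X → Y) (e : B → Y) {f : A × I → X} {g : B → X}
    (hf : ∀ x, p (f x) = e x.1) (hg : ∀ b, p (g b) = e b) (z : B × I) :
    p (cylinderGlue f g z) = e z.1 := by
  unfold cylinderGlue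
  split_ifs
  exacts [hf _, hg _]

variable [TopologicalSpace B] [TopologicalSpace X]

theorem continuousOn_cylinderGlue (hA : IsClosed A) {f : A × I → X} {g : B → X}
    (hf : Continuous f) (hg : Continuous g) (hfg : ∀ a, f (a, 0) = g a) :
    ContinuousOn (cylinderGlue f g) {z | z.1 ∈ A ∨ z.2 = 0} := by
  have hTop : ContinuousOn (cylinderGlue f g) {z | z.1 ∈ A} := by
    rw [continuousOn_iff_continuous_domRestrict]
    have hval : Continuous fun z : {z : B × I | z.1 ∈ A} => (z : B × I) := continuous_subtype_val
    convert hf.comp (((continuous_fst.comp hval).subtype_mk fun z => z.2).prodMk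
      (continuous_snd.comp hval)) using 1
    funext z
    exact dif_pos z.2
  have hBottom : ContinuousOn (cylinderGlue f g) {z | z.2 = 0} :=
    (hg.comp continuous_fst).continuousOn.congr fun ⟨b, _⟩ (hz : _ = 0) => by
      subst hz
      exact cylinderGlue_zero hfg b
  exact hTop.union_of_isClosed hBottom (hA.preimage continuous_fst)
    (isClosed_eq continuous_snd continuous_const)

noncomputable def cylinderExtend (hA : IsClosed A) (r : C(B × I, B × I))
    (hr_into : ∀ z, (r z).1 ∈ A ∨ (r z).2 = 0) (f : C(A × I, X)) (g : C(B, X))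
    (hfg : ∀ a, f (a, 0) = g a) : C(B × I, X) :=
  ⟨cylinderGlue f g ∘ r,
    (continuousOn_cylinderGlue hA f.continuous g.continuous hfg).comp_continuous r.continuous
      hr_into⟩

end MappingCylinder

/-- Section extension along a shrinkable map: if `p : X → B` is shrinkable, `A ⊆ B` is a
closed subspace whose inclusion is a Hurewicz cofibration (encoded by a retraction of
`B × I` onto `(A × I) ∪ B × {0}`), and `s` is a partial section of `p` over `A`, then `s`
extends to a global map `sig : B → X` with `p ∘ sig` homotopic to `id_B` rel `A`. -/
theorem shrinkable_section_extension {X B : Type*} [TopologicalSpace X] [TopologicalSpace B]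
    (p : C(X, B)) (hp : Shrinkable p) (A : Set B) (hA : IsClosed A)
    (r : C(B × I, B × I))
    (hr_retr : ∀ z : B × I, (z.1 ∈ A ∨ z.2 = 0) → r z = z)
    (hr_into : ∀ z : B × I, (r z).1 ∈ A ∨ (r z).2 = 0)
    (s : C(A, X)) (hs : ∀ a : A, p (s a) = a) :
    ∃ sig : C(B, X), (∀ a : A, sig a = s a) ∧
      ∃ H : C(B × I, B),
        (∀ b, H (b, 0) = p (sig b)) ∧ (∀ b, H (b, 1) = b) ∧
          ∀ (a : A) (t : I), H (a, t) = a := by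
  obtain ⟨S, H, hS, h0, h1, hfib, -⟩ := hp
  let f : C(A × I, X) := H.comp (s.prodMap ⟨σ, continuous_symm⟩)
  have hfS : ∀ a, f (a, 0) = S a := fun a => by
    simp [f, h1, hs]
  let Ψ := cylinderExtend hA r hr_into f S hfS
  have hpΨ : ∀ z, p (Ψ z) = (r z).1 := fun z =>
    cylinderGlue_mem_fiber p id (fun x => by simp [f, hfib, hs]) hS (r z)
  refine ⟨Ψ.comp ⟨(·, 1), by fun_prop⟩, fun a => ?_,
    ContinuousMap.fst.comp (r.comp ((ContinuousMap.id B).prodMap ⟨σ, continuous_symm⟩)),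
    fun b => by simp [hpΨ], fun b => by simp [hr_retr (b, 0)], fun a t => by simp [hr_retr]⟩
  change cylinderGlue f S (r ((a : B), 1)) = s a
  rw [hr_retr _ (Or.inl a.2), cylinderGlue_of_mem]
  simp [f, h0]
end

section
/- The space of sections of a shrinkable map is contractible: if p : X → B is shrinkable, then the space of continuous sections of p (with the compact-open topology) is contractible. -/
open unitInterval

section

variable {X B T : Type*} [TopologicalSpace X] [TopologicalSpace B] [TopologicalSpace T]

/-- Continuity needs no local compactness: the time parameter enters only through the constant
maps `const B t`, and `ContinuousMap.continuous_prodMk_const` holds in general. -/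
def sectionsHomotopy (p : C(X, B)) (H : C(X × T, X)) (hH : ∀ x t, p (H (x, t)) = p x) :
    C(T × {f : C(B, X) // ∀ b, p (f b) = b}, {f : C(B, X) // ∀ b, p (f b) = b}) where
  toFun q := ⟨(H.comp .prodSwap).comp (.prodMk (.const B q.1) q.2.1), fun b =>
    show p (H (q.2.1 b, q.1)) = b from (hH _ _).trans (q.2.2 b)⟩
  continuous_toFun := ((ContinuousMap.continuous_postcomp _).comp
    (ContinuousMap.continuous_prodMk_const.comp
      (continuous_id.prodMap continuous_subtype_val))).subtype_mk _

@[simp]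
lemma sectionsHomotopy_apply_apply (p : C(X, B)) (H : C(X × T, X))
    (hH : ∀ x t, p (H (x, t)) = p x) (t : T) (g : {f : C(B, X) // ∀ b, p (f b) = b}) (b : B) :
    (sectionsHomotopy p H hH (t, g)).1 b = H (g.1 b, t) :=
  rfl

end

/-- The space of sections of a shrinkable map, with the compact-open topology, is
contractible. -/
theorem shrinkable_sectionSpace_contractible {X B : Type*} [TopologicalSpace X]
    [TopologicalSpace B] (p : C(X, B)) (hp : Shrinkable p) :
    ContractibleSpace {sig : C(B, X) // ∀ b, p (sig b) = b} := by
  obtain ⟨s, H, hs, h0, h1, hH, -⟩ := hp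
  rw [contractible_iff_id_nullhomotopic]
  exact ⟨⟨s, hs⟩, ⟨{
    toContinuousMap := sectionsHomotopy p H hH
    map_zero_left g := Subtype.ext <| ContinuousMap.ext fun b => by simp [h0]
    map_one_left g := Subtype.ext <| ContinuousMap.ext fun b => by simp [h1, g.2 b] }⟩⟩
end
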